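/- Let G₁ and G₂ be finite graphs on disjoint nonempty vertex sets, let x be a vertex of G₁, and let G be the graph obtained by substituting G₂ for x in G₁: the vertex set of G is (V(G₁) ∖ {x}) ∪ V(G₂); two vertices of V(G₁) ∖ {x} are adjacent in G iff they are adjacent in G₁; two vertices of V(G₂) are adjacent in G iff they are adjacent in G₂; and a vertex u ∈ V(G₁) ∖ {x} is adjacent in G to every vertex of V(G₂) if u is adjacent to x in G₁, and to no vertex of V(G₂) otherwise. If G₁ and G₂ are both bull-free, then G is bull-free. -/

import Mathlib

open SimpleGraph

/-- The bull: a path 0-1-2-3 together with vertex 4 adjacent to the middle vertices 1 and 2. -/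
def bull : SimpleGraph (Fin 5) :=
  SimpleGraph.fromEdgeSet {s(0, 1), s(1, 2), s(2, 3), s(1, 4), s(2, 4)}

/-- A graph is bull-free if no induced subgraph is isomorphic to the bull,
i.e. there is no graph embedding of the bull into it. -/
def BullFree {V : Type*} (G : SimpleGraph V) : Prop :=
  ¬ Nonempty (bull ↪g G)

/-- A graph is perfect if every induced subgraph has chromatic number equal to clique number. -/
def IsPerfect {V : Type*} (G : SimpleGraph V) : Prop :=
  ∀ s : Set V, (G.induce s).chromaticNumber = ((G.induce s).cliqueNum : ℕ∞)

/-- `X` is a homogeneous set in `G`: `1 < |X| < |V(G)|` and each vertex outside `X`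
is adjacent to all of `X` or to none of `X`. -/
def IsHomogeneousSet {V : Type*} (G : SimpleGraph V) (X : Set V) : Prop :=
  1 < X.ncard ∧ X.ncard < Nat.card V ∧
    ∀ v ∉ X, (∀ x ∈ X, G.Adj v x) ∨ (∀ x ∈ X, ¬ G.Adj v x)

/-- A graph is prime if it has no homogeneous set. -/
def IsPrimeGraph {V : Type*} (G : SimpleGraph V) : Prop :=
  ¬ ∃ X : Set V, IsHomogeneousSet G X

/-- A graph is N-perfect if for every vertex `v`, the subgraph induced on the neighborhood
of `v` or the subgraph induced on the complement of the neighborhood of `v` is perfect. -/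
def IsNPerfect {V : Type*} (G : SimpleGraph V) : Prop :=
  ∀ v : V, IsPerfect (G.induce (G.neighborSet v)) ∨ IsPerfect (G.induce (G.neighborSet v)ᶜ)

/-!
The bull is prime: it has no homogeneous set. In an induced bull of the substituted graph, the
vertices lying in `G₂` form a homogeneous set of the bull, since every other vertex sees all of
`G₂` or none of it. Hence either all five vertices lie in `G₂`, giving a bull in `G₂`, or at most
one does, and contracting `G₂` back to `x` gives a bull in `G₁`.
-/

instance : DecidableRel bull.Adj := fun a b =>
  decidable_of_iff ((s(a, b) = s(0, 1) ∨ s(a, b) = s(1, 2) ∨ s(a, b) = s(2, 3) ∨ s(a, b) = s(1, 4)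
      ∨ s(a, b) = s(2, 4)) ∧ a ≠ b)
    (by simp [bull, fromEdgeSet_adj])

theorem isPrimeGraph_bull : IsPrimeGraph bull := by
  classical
  rintro ⟨X, hX⟩
  rw [← X.coe_toFinset] at hX
  revert hX
  generalize X.toFinset = s
  simp only [IsHomogeneousSet, Set.ncard_coe_finset, Nat.card_eq_fintype_card, Fintype.card_fin,
    Finset.mem_coe]
  revert s
  decide

/-- `G` is obtained from `G₁` by substituting `G₂` for the vertex `x`. -/
structure IsSubstitution {V₁ V₂ : Type*} (G₁ : SimpleGraph V₁) (G₂ : SimpleGraph V₂) (x : V₁)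
    (G : SimpleGraph ({y : V₁ // y ≠ x} ⊕ V₂)) : Prop where
  adj_inl_inl : ∀ u v : {y : V₁ // y ≠ x}, G.Adj (.inl u) (.inl v) ↔ G₁.Adj u v
  adj_inr_inr : ∀ u v : V₂, G.Adj (.inr u) (.inr v) ↔ G₂.Adj u v
  adj_inl_inr : ∀ (u : {y : V₁ // y ≠ x}) (w : V₂), G.Adj (.inl u) (.inr w) ↔ G₁.Adj u x

namespace IsSubstitution

variable {V₁ V₂ W : Type*} {G₁ : SimpleGraph V₁} {G₂ : SimpleGraph V₂} {x : V₁}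
  {G : SimpleGraph ({y : V₁ // y ≠ x} ⊕ V₂)} {H : SimpleGraph W}

def collapse (x : V₁) : {y : V₁ // y ≠ x} ⊕ V₂ → V₁ :=
  Sum.elim Subtype.val fun _ => x

theorem collapse_eq_collapse_iff {a b : {y : V₁ // y ≠ x} ⊕ V₂} :
    collapse x a = collapse x b ↔ a = b ∨ (a.isRight ∧ b.isRight) := by
  rcases a with u | _ <;> rcases b with v | _
  · simp [collapse, Subtype.ext_iff]
  · simpa [collapse] using u.2
  · simpa [collapse, eq_comm] using v.2
  · simp [collapse]

theorem adj_iff_adj_collapse (hG : IsSubstitution G₁ G₂ x G)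
    {a b : {y : V₁ // y ≠ x} ⊕ V₂} (hab : ¬ (a.isRight ∧ b.isRight)) :
    G.Adj a b ↔ G₁.Adj (collapse x a) (collapse x b) := by
  rcases a with u | w <;> rcases b with v | w'
  · exact hG.adj_inl_inl u v
  · exact hG.adj_inl_inr u w'
  · rw [G.adj_comm, G₁.adj_comm]
    exact hG.adj_inl_inr v w
  · simp at hab

theorem adj_iff_adj_of_isRight (hG : IsSubstitution G₁ G₂ x G)
    {a b c : {y : V₁ // y ≠ x} ⊕ V₂} (ha : ¬ a.isRight) (hb : b.isRight) (hc : c.isRight) :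
    G.Adj a b ↔ G.Adj a c := by
  rw [hG.adj_iff_adj_collapse (by simp [ha]), hG.adj_iff_adj_collapse (by simp [ha])]
  obtain ⟨_, rfl⟩ := Sum.isRight_iff.mp hb
  obtain ⟨_, rfl⟩ := Sum.isRight_iff.mp hc
  rfl

theorem nonempty_embedding_right (hG : IsSubstitution G₁ G₂ x G) (f : H ↪g G)
    (hf : ∀ i, (f i).isRight) : Nonempty (H ↪g G₂) := by
  choose g hg using fun i => Sum.isRight_iff.mp (hf i)
  refine ⟨⟨⟨g, fun i j hij => f.injective (by rw [hg, hg, hij])⟩, fun {i j} => ?_⟩⟩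
  rw [← f.map_adj_iff, hg, hg, hG.adj_inr_inr]
  rfl

theorem nonempty_embedding_left (hG : IsSubstitution G₁ G₂ x G) (f : H ↪g G)
    (hf : {i | (f i).isRight}.Subsingleton) : Nonempty (H ↪g G₁) := by
  have h_eq_of_isRight {i j : W} (hij : (f i).isRight ∧ (f j).isRight) : i = j :=
    hf hij.1 hij.2
  refine ⟨⟨⟨fun i => collapse x (f i), fun i j hij => ?_⟩, fun {i j} => ?_⟩⟩
  · rcases collapse_eq_collapse_iff.mp hij with h | h
    · exact f.injective h
    · exact h_eq_of_isRight h
  · by_cases hij : (f i).isRight ∧ (f j).isRight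
    · obtain rfl := h_eq_of_isRight hij
      simp
    · change G₁.Adj (collapse x (f i)) (collapse x (f j)) ↔ _
      rw [← hG.adj_iff_adj_collapse hij, f.map_adj_iff]

/-- The vertices of `H` mapped into `V₂` form a homogeneous set of `H`. -/
theorem subsingleton_or_forall_isRight [Finite W] (hG : IsSubstitution G₁ G₂ x G)
    (hH : IsPrimeGraph H) (f : H ↪g G) :
    {i | (f i).isRight}.Subsingleton ∨ ∀ i, (f i).isRight := by
  by_contra! ⟨hnt, c, hc⟩
  refine hH ⟨_, Set.one_lt_ncard_iff_nontrivial.mpr hnt,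
    Set.ncard_lt_card fun h => hc (Set.eq_univ_iff_forall.mp h c), fun v hv => ?_⟩
  have hadj {a b : W} (ha : (f a).isRight) (hb : (f b).isRight) : H.Adj v a ↔ H.Adj v b := by
    rw [← f.map_adj_iff, ← f.map_adj_iff]
    exact hG.adj_iff_adj_of_isRight hv ha hb
  by_cases h : ∃ a, (f a).isRight ∧ H.Adj v a
  · obtain ⟨a, ha, hva⟩ := h
    exact .inl fun b hb => (hadj ha hb).mp hva
  · exact .inr fun a ha hva => h ⟨a, ha, hva⟩

end IsSubstitution

theorem stmt11_general {V₁ V₂ : Type*}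
    (G₁ : SimpleGraph V₁) (G₂ : SimpleGraph V₂) (x : V₁)
    (G : SimpleGraph ({y : V₁ // y ≠ x} ⊕ V₂))
    (hll : ∀ u v : {y : V₁ // y ≠ x}, G.Adj (Sum.inl u) (Sum.inl v) ↔ G₁.Adj u v)
    (hrr : ∀ u v : V₂, G.Adj (Sum.inr u) (Sum.inr v) ↔ G₂.Adj u v)
    (hlr : ∀ (u : {y : V₁ // y ≠ x}) (w : V₂), G.Adj (Sum.inl u) (Sum.inr w) ↔ G₁.Adj u x)
    (hbf1 : BullFree G₁) (hbf2 : BullFree G₂) :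
    BullFree G := by
  rintro ⟨f⟩
  have hG : IsSubstitution G₁ G₂ x G := ⟨hll, hrr, hlr⟩
  rcases hG.subsingleton_or_forall_isRight isPrimeGraph_bull f with hf | hf
  · exact hbf1 (hG.nonempty_embedding_left f hf)
  · exact hbf2 (hG.nonempty_embedding_right f hf)

/-- Substituting a bull-free graph `G₂` for a vertex `x` of a bull-free graph
`G₁` yields a bull-free graph.  The substituted graph is represented as a graph `G` on the
disjoint union `{y : V₁ // y ≠ x} ⊕ V₂`, whose adjacency is characterized by the three
hypotheses `hll`, `hrr` and `hlr`. -/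
theorem stmt11 {V₁ V₂ : Type*} [Fintype V₁] [Fintype V₂] [Nonempty V₁] [Nonempty V₂]
    (G₁ : SimpleGraph V₁) (G₂ : SimpleGraph V₂) (x : V₁)
    (G : SimpleGraph ({y : V₁ // y ≠ x} ⊕ V₂))
    (hll : ∀ u v : {y : V₁ // y ≠ x}, G.Adj (Sum.inl u) (Sum.inl v) ↔ G₁.Adj u v)
    (hrr : ∀ u v : V₂, G.Adj (Sum.inr u) (Sum.inr v) ↔ G₂.Adj u v)
    (hlr : ∀ (u : {y : V₁ // y ≠ x}) (w : V₂), G.Adj (Sum.inl u) (Sum.inr w) ↔ G₁.Adj u x)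
    (hbf1 : BullFree G₁) (hbf2 : BullFree G₂) :
    BullFree G :=
  stmt11_general G₁ G₂ x G hll hrr hlr hbf1 hbf2
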